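/- Conditionally on the design {(D_i, C_i)}, if the errors e_1,…,e_{m+n} are independent and identically distributed with P(e_i > 0) = 1 − τ, then the variance of the linearized statistic is var(T*_τ(m,n)) = {(1−τ)m}^{-2} Σ_{D_i=1} (E[e_i² I(e_i>0)] − (E[e_i I(e_i>0)])²) + τ(1−τ)(C̄_τ(1) − C̄_τ(0))² U_f^{-2} Σ_i (C_i*)² + {(1−τ)n}^{-2} Σ_{D_i=0} (E[e_i² I(e_i>0)] − (E[e_i I(e_i>0)])²); in particular, the covariance cross-terms between the tail-average components and the indicator components vanish because Σ_{D_i=d} C_i* = 0 within each group. -/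

import Mathlib

open MeasureTheory ProbabilityTheory Finset

noncomputable section

variable {Ω : Type*} [MeasurableSpace Ω]

/-- Group-1 indices (`D i = 1`): `i = 0, …, m−1`. -/
def grp1 (m : ℕ) : Finset ℕ := Finset.range m

/-- Group-0 indices (`D i = 0`): `i = m, …, m+n−1`. -/
def grp0 (m n : ℕ) : Finset ℕ := Finset.Ico m (m + n)

/-- Group-centered covariate `C_i* = C_i − N_d⁻¹ Σ_{D_j = D_i} C_j`. -/
def Cstar (m n : ℕ) (C : ℕ → ℝ) (i : ℕ) : ℝ :=
  if i < m then C i - (∑ j ∈ grp1 m, C j) / m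
  else C i - (∑ j ∈ grp0 m n, C j) / n

/-- `U_f = Σ_i f_i C_i*²`, where `f_i` is the conditional density of `e_i` at `0`. -/
def Uf (m n : ℕ) (C f : ℕ → ℝ) : ℝ :=
  ∑ i ∈ Finset.range (m + n), f i * (Cstar m n C i) ^ 2

/-- The linearized COVES statistic `T*_τ(m,n)`. -/
def Tstar (m n : ℕ) (τ δτ : ℝ) (C f : ℕ → ℝ) (Cb1 Cb0 : ℝ)
    (e : ℕ → Ω → ℝ) (ω : Ω) : ℝ :=
  δτ
    + (((1 - τ) * m)⁻¹ * ∑ i ∈ grp1 m, e i ω * (if 0 < e i ω then 1 else 0)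
        - (Cb1 - Cb0) * (Uf m n C f)⁻¹ *
            ∑ i ∈ grp1 m, Cstar m n C i * (if 0 ≤ e i ω then 1 else 0))
    - (((1 - τ) * n)⁻¹ * ∑ i ∈ grp0 m n, e i ω * (if 0 < e i ω then 1 else 0)
        + (Cb1 - Cb0) * (Uf m n C f)⁻¹ *
            ∑ i ∈ grp0 m n, Cstar m n C i * (if 0 ≤ e i ω then 1 else 0))

/-!
`T* - δ(τ)` is a sum over subjects of the independent terms `w_i e_i⁺ - k C_i* H(e_i)`, where
`w_i = ±{(1-τ) N_d}⁻¹`, `k = (C̄_τ(1) - C̄_τ(0)) U_f⁻¹` and `H` is the Heaviside step, so its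
variance is the sum of their variances. Since `e⁺ H(e) = e⁺`, `H(e)² = H(e)` and
`E H(e) = P(e > 0) = 1 - τ` (the atom at `0` is null), the indicator part has variance `τ(1-τ)` and
covariance `τ E[e⁺]` with the tail part. The cross terms therefore add up to
`2 k τ E[e⁺] Σ_i w_i C_i*`, which vanishes because `E[e_i⁺]` does not depend on `i` (identical
distribution) and `C*` is centred within each group.
-/

def heaviside (x : ℝ) : ℝ := if 0 ≤ x then 1 else 0

lemma mul_ite_pos_eq_posPart (x : ℝ) : x * (if 0 < x then 1 else 0) = x⁺ := by
  split_ifs with h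
  · rw [mul_one, posPart_of_nonneg h.le]
  · rw [mul_zero, posPart_eq_zero.2 (not_lt.1 h)]

lemma posPart_sq_eq (x : ℝ) : x⁺ ^ 2 = x ^ 2 * (if 0 < x then 1 else 0) := by
  rw [← mul_ite_pos_eq_posPart]
  split_ifs <;> ring

lemma posPart_mul_heaviside (x : ℝ) : x⁺ * heaviside x = x⁺ := by
  unfold heaviside
  split_ifs with h
  · rw [mul_one]
  · rw [posPart_eq_zero.2 (not_le.1 h).le, zero_mul]

lemma heaviside_sq (x : ℝ) : heaviside x ^ 2 = heaviside x := by
  unfold heaviside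
  split_ifs <;> norm_num

lemma measurable_heaviside : Measurable heaviside :=
  Measurable.ite measurableSet_Ici measurable_const measurable_const

lemma Finset.sum_sub_sum_div_card_eq_zero {ι K : Type*} [Field K] [CharZero K] (s : Finset ι) (f : ι → K) :
    ∑ i ∈ s, (f i - (∑ j ∈ s, f j) / #s) = 0 := by
  rcases s.eq_empty_or_nonempty with rfl | hs
  · simp
  · rw [sum_sub_distrib, sum_const, nsmul_eq_mul,
      mul_div_cancel₀ _ (Nat.cast_ne_zero.2 hs.card_ne_zero), sub_self]

lemma sum_grp1_Cstar_eq_zero (m n : ℕ) (C : ℕ → ℝ) : ∑ i ∈ grp1 m, Cstar m n C i = 0 := by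
  have hcard : ((grp1 m).card : ℝ) = m := by simp [grp1]
  rw [← (grp1 m).sum_sub_sum_div_card_eq_zero C, hcard]
  exact sum_congr rfl fun i hi => if_pos (mem_range.1 hi)

lemma sum_grp0_Cstar_eq_zero (m n : ℕ) (C : ℕ → ℝ) : ∑ i ∈ grp0 m n, Cstar m n C i = 0 := by
  have hcard : ((grp0 m n).card : ℝ) = n := by simp [grp0]
  rw [← (grp0 m n).sum_sub_sum_div_card_eq_zero C, hcard]
  exact sum_congr rfl fun i hi => if_neg (mem_Ico.1 hi).1.not_gt

def groupWeight (m n : ℕ) (τ : ℝ) (i : ℕ) : ℝ :=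
  if i < m then ((1 - τ) * m)⁻¹ else -((1 - τ) * n)⁻¹

def linearizedSummand (m n : ℕ) (τ k : ℝ) (C : ℕ → ℝ) (i : ℕ) (x : ℝ) : ℝ :=
  groupWeight m n τ i * x⁺ - k * Cstar m n C i * heaviside x

lemma measurable_linearizedSummand (m n : ℕ) (τ k : ℝ) (C : ℕ → ℝ) (i : ℕ) :
    Measurable (linearizedSummand m n τ k C i) :=
  (measurable_const.mul (measurable_id.max measurable_const)).sub
    (measurable_const.mul measurable_heaviside)

lemma Tstar_eq_const_add_sum {α : Type*} (m n : ℕ) (τ δτ : ℝ) (C f : ℕ → ℝ) (Cb1 Cb0 : ℝ)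
    (e : ℕ → α → ℝ) :
    Tstar m n τ δτ C f Cb1 Cb0 e = fun ω => δτ + ∑ i ∈ range (m + n),
      linearizedSummand m n τ ((Cb1 - Cb0) * (Uf m n C f)⁻¹) C i (e i ω) := by
  funext ω
  set k := (Cb1 - Cb0) * (Uf m n C f)⁻¹
  have h1 : ∑ i ∈ grp1 m, linearizedSummand m n τ k C i (e i ω) =
      ((1 - τ) * m)⁻¹ * ∑ i ∈ grp1 m, (e i ω)⁺
        - k * ∑ i ∈ grp1 m, Cstar m n C i * heaviside (e i ω) := by
    rw [mul_sum, mul_sum, ← sum_sub_distrib]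
    refine sum_congr rfl fun i hi => ?_
    rw [linearizedSummand, groupWeight, if_pos (mem_range.1 hi), mul_assoc]
  have h0 : ∑ i ∈ grp0 m n, linearizedSummand m n τ k C i (e i ω) =
      -((1 - τ) * n)⁻¹ * ∑ i ∈ grp0 m n, (e i ω)⁺
        - k * ∑ i ∈ grp0 m n, Cstar m n C i * heaviside (e i ω) := by
    rw [mul_sum, mul_sum, ← sum_sub_distrib]
    refine sum_congr rfl fun i hi => ?_
    rw [linearizedSummand, groupWeight, if_neg (mem_Ico.1 hi).1.not_gt, mul_assoc]
  rw [← sum_range_add_sum_Ico _ (m.le_add_right n)]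
  change _ = δτ + (∑ i ∈ grp1 m, _ + ∑ i ∈ grp0 m n, _)
  rw [h1, h0]
  simp only [Tstar, mul_ite_pos_eq_posPart, heaviside]
  ring

lemma sum_groupWeight_mul_Cstar_eq_zero (m n : ℕ) (τ : ℝ) (C : ℕ → ℝ) :
    ∑ i ∈ range (m + n), groupWeight m n τ i * Cstar m n C i = 0 := by
  rw [← sum_range_add_sum_Ico _ (m.le_add_right n)]
  simp only [groupWeight, ite_mul]
  rw [sum_ite_of_true fun i hi => mem_range.1 hi,
    sum_ite_of_false fun i hi => (mem_Ico.1 hi).1.not_gt, ← mul_sum, ← mul_sum]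
  change _ * ∑ i ∈ grp1 m, _ + _ * ∑ i ∈ grp0 m n, _ = 0
  rw [sum_grp1_Cstar_eq_zero, sum_grp0_Cstar_eq_zero, mul_zero, mul_zero, add_zero]

lemma sum_groupWeight_sq_mul (m n : ℕ) (τ : ℝ) (V : ℕ → ℝ) :
    ∑ i ∈ range (m + n), groupWeight m n τ i ^ 2 * V i =
      (((1 - τ) * m) ^ 2)⁻¹ * ∑ i ∈ grp1 m, V i + (((1 - τ) * n) ^ 2)⁻¹ * ∑ i ∈ grp0 m n, V i := by
  rw [← sum_range_add_sum_Ico _ (m.le_add_right n)]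
  simp only [groupWeight, ite_pow, ite_mul]
  rw [sum_ite_of_true fun i hi => mem_range.1 hi,
    sum_ite_of_false fun i hi => (mem_Ico.1 hi).1.not_gt, ← mul_sum, ← mul_sum, neg_sq,
    inv_pow, inv_pow]
  rfl

lemma sum_variance_linearizedSummand (m n : ℕ) (τ k : ℝ) (C V μ : ℕ → ℝ) (hμ : ∀ i, μ i = μ 0) :
    ∑ i ∈ range (m + n), (groupWeight m n τ i ^ 2 * V i
        + (k * Cstar m n C i) ^ 2 * (τ * (1 - τ))
        - 2 * groupWeight m n τ i * (k * Cstar m n C i) * (τ * μ i)) =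
      (((1 - τ) * m) ^ 2)⁻¹ * ∑ i ∈ grp1 m, V i
        + τ * (1 - τ) * k ^ 2 * ∑ i ∈ range (m + n), Cstar m n C i ^ 2
        + (((1 - τ) * n) ^ 2)⁻¹ * ∑ i ∈ grp0 m n, V i := by
  have hcross : ∑ i ∈ range (m + n),
      2 * groupWeight m n τ i * (k * Cstar m n C i) * (τ * μ i) = 0 := by
    calc _ = 2 * k * τ * μ 0 * ∑ i ∈ range (m + n), groupWeight m n τ i * Cstar m n C i := by
          rw [mul_sum]
          exact sum_congr rfl fun i _ => by rw [hμ i]; ring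
      _ = 0 := by rw [sum_groupWeight_mul_Cstar_eq_zero, mul_zero]
  have hcov : ∑ i ∈ range (m + n), (k * Cstar m n C i) ^ 2 * (τ * (1 - τ)) =
      τ * (1 - τ) * k ^ 2 * ∑ i ∈ range (m + n), Cstar m n C i ^ 2 := by
    rw [mul_sum]
    exact sum_congr rfl fun i _ => by ring
  rw [sum_sub_distrib, sum_add_distrib, hcross, hcov, sum_groupWeight_sq_mul]
  ring

lemma ProbabilityTheory.iIndepFun.variance_const_add_sum_comp {ι : Type*} {P : Measure Ω}
    [IsProbabilityMeasure P] {e : ι → Ω → ℝ} (hindep : iIndepFun e P) {φ : ι → ℝ → ℝ}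
    (hφ : ∀ i, Measurable (φ i))
    (s : Finset ι) (hL2 : ∀ i ∈ s, MemLp (fun ω => φ i (e i ω)) 2 P) (c : ℝ) :
    Var[fun ω => c + ∑ i ∈ s, φ i (e i ω); P] = ∑ i ∈ s, Var[fun ω => φ i (e i ω); P] := by
  calc Var[fun ω => c + ∑ i ∈ s, φ i (e i ω); P] = Var[∑ i ∈ s, fun ω => φ i (e i ω); P] := by
        simpa only [Finset.sum_apply] using
          variance_const_add (memLp_finsetSum' s hL2).aestronglyMeasurable c
    _ = ∑ i ∈ s, Var[fun ω => φ i (e i ω); P] :=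
        IndepFun.variance_sum hL2 fun i _ j _ hij => (hindep.indepFun hij).comp (hφ i) (hφ j)

section TailMoments

variable {P : Measure Ω} {X : Ω → ℝ}

lemma memLp_posPart_comp (hX : Measurable X)
    (h2 : Integrable (fun ω => X ω ^ 2 * (if 0 < X ω then 1 else 0)) P) :
    MemLp (fun ω => (X ω)⁺) 2 P := by
  have hm : Measurable fun ω => (X ω)⁺ := hX.max measurable_const
  rw [memLp_two_iff_integrable_sq hm.aestronglyMeasurable]
  simpa only [posPart_sq_eq] using h2

lemma memLp_heaviside_comp [IsFiniteMeasure P] (hX : Measurable X) :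
    MemLp (fun ω => heaviside (X ω)) 2 P := by
  refine MemLp.of_bound (measurable_heaviside.comp hX).aestronglyMeasurable 1
    (ae_of_all _ fun ω => ?_)
  unfold heaviside
  split_ifs <;> norm_num

lemma integral_heaviside_comp (hX : Measurable X) (hzero : P {ω | X ω = 0} = 0) :
    ∫ ω, heaviside (X ω) ∂P = P.real {ω | 0 < X ω} := by
  have hae : (fun ω => heaviside (X ω)) =ᵐ[P] {ω | 0 < X ω}.indicator 1 := by
    filter_upwards [measure_eq_zero_iff_ae_notMem.1 hzero] with ω (hω : X ω ≠ 0)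
    simp only [heaviside, Set.indicator_apply, Set.mem_ofPred_eq, Pi.one_apply, le_iff_lt_or_eq,
      hω.symm, or_false]
  rw [integral_congr_ae hae, integral_indicator_one (measurableSet_lt measurable_const hX)]

lemma variance_heaviside_comp [IsProbabilityMeasure P] (hX : Measurable X)
    (hzero : P {ω | X ω = 0} = 0) :
    Var[fun ω => heaviside (X ω); P] = P.real {ω | 0 < X ω} * (1 - P.real {ω | 0 < X ω}) := by
  rw [variance_eq_sub (memLp_heaviside_comp hX)]
  simp only [Pi.pow_apply, heaviside_sq, integral_heaviside_comp hX hzero]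
  ring

lemma covariance_posPart_heaviside_comp [IsProbabilityMeasure P] (hX : Measurable X)
    (hzero : P {ω | X ω = 0} = 0)
    (h2 : Integrable (fun ω => X ω ^ 2 * (if 0 < X ω then 1 else 0)) P) :
    cov[fun ω => (X ω)⁺, fun ω => heaviside (X ω); P] =
      (1 - P.real {ω | 0 < X ω}) * ∫ ω, (X ω)⁺ ∂P := by
  rw [covariance_eq_sub (memLp_posPart_comp hX h2) (memLp_heaviside_comp hX)]
  simp only [Pi.mul_apply, posPart_mul_heaviside, integral_heaviside_comp hX hzero]
  ring

lemma variance_posPart_comp [IsProbabilityMeasure P] (hX : Measurable X)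
    (h2 : Integrable (fun ω => X ω ^ 2 * (if 0 < X ω then 1 else 0)) P) :
    Var[fun ω => (X ω)⁺; P] =
      ∫ ω, X ω ^ 2 * (if 0 < X ω then 1 else 0) ∂P - (∫ ω, (X ω)⁺ ∂P) ^ 2 := by
  rw [variance_eq_sub (memLp_posPart_comp hX h2)]
  simp only [Pi.pow_apply, posPart_sq_eq]

lemma memLp_linearizedSummand_comp [IsFiniteMeasure P] (hX : Measurable X)
    (h2 : Integrable (fun ω => X ω ^ 2 * (if 0 < X ω then 1 else 0)) P)
    (m n : ℕ) (τ k : ℝ) (C : ℕ → ℝ) (i : ℕ) :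
    MemLp (fun ω => linearizedSummand m n τ k C i (X ω)) 2 P :=
  ((memLp_posPart_comp hX h2).const_mul _).sub ((memLp_heaviside_comp hX).const_mul _)

lemma variance_linearizedSummand_comp [IsProbabilityMeasure P] {τ : ℝ} (hX : Measurable X)
    (htail : P.real {ω | 0 < X ω} = 1 - τ) (hzero : P {ω | X ω = 0} = 0)
    (h2 : Integrable (fun ω => X ω ^ 2 * (if 0 < X ω then 1 else 0)) P)
    (m n : ℕ) (k : ℝ) (C : ℕ → ℝ) (i : ℕ) :
    Var[fun ω => linearizedSummand m n τ k C i (X ω); P] =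
      groupWeight m n τ i ^ 2 *
          (∫ ω, X ω ^ 2 * (if 0 < X ω then 1 else 0) ∂P - (∫ ω, (X ω)⁺ ∂P) ^ 2)
        + (k * Cstar m n C i) ^ 2 * (τ * (1 - τ))
        - 2 * groupWeight m n τ i * (k * Cstar m n C i) * (τ * ∫ ω, (X ω)⁺ ∂P) := by
  unfold linearizedSummand
  rw [variance_fun_sub ((memLp_posPart_comp hX h2).const_mul _)
      ((memLp_heaviside_comp hX).const_mul _), variance_const_mul, variance_const_mul,
    covariance_const_mul_left, covariance_const_mul_right,
    variance_posPart_comp hX h2, variance_heaviside_comp hX hzero,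
    covariance_posPart_heaviside_comp hX hzero h2, htail]
  ring

end TailMoments

theorem coves_linearized_variance_general
    (P : Measure Ω) [IsProbabilityMeasure P]
    (m n : ℕ) (τ δτ : ℝ)
    (C f : ℕ → ℝ) (Cb1 Cb0 : ℝ)
    (e : ℕ → Ω → ℝ) (hmeas : ∀ i, Measurable (e i))
    (hindep : iIndepFun e P)
    (hident : ∀ i j, IdentDistrib (e i) (e j) P P)
    (htail : ∀ i ∈ Finset.range (m + n), (P {ω | 0 < e i ω}).toReal = 1 - τ)
    (hcont : ∀ i ∈ Finset.range (m + n), P {ω | e i ω = 0} = 0)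
    (hint2 : ∀ i ∈ Finset.range (m + n),
      Integrable (fun ω => (e i ω) ^ 2 * (if 0 < e i ω then 1 else 0)) P) :
    variance (Tstar m n τ δτ C f Cb1 Cb0 e) P =
        (((1 - τ) * m) ^ 2)⁻¹ *
          ∑ i ∈ grp1 m,
            ((∫ ω, (e i ω) ^ 2 * (if 0 < e i ω then 1 else 0) ∂P)
              - (∫ ω, e i ω * (if 0 < e i ω then 1 else 0) ∂P) ^ 2)
      + τ * (1 - τ) * (Cb1 - Cb0) ^ 2 * ((Uf m n C f) ^ 2)⁻¹ *
          ∑ i ∈ Finset.range (m + n), (Cstar m n C i) ^ 2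
      + (((1 - τ) * n) ^ 2)⁻¹ *
          ∑ i ∈ grp0 m n,
            ((∫ ω, (e i ω) ^ 2 * (if 0 < e i ω then 1 else 0) ∂P)
              - (∫ ω, e i ω * (if 0 < e i ω then 1 else 0) ∂P) ^ 2) ∧
      (∑ i ∈ grp1 m, Cstar m n C i = 0 ∧ ∑ i ∈ grp0 m n, Cstar m n C i = 0) := by
  refine ⟨?_, sum_grp1_Cstar_eq_zero m n C, sum_grp0_Cstar_eq_zero m n C⟩
  have hμ : ∀ i, ∫ ω, (e i ω)⁺ ∂P = ∫ ω, (e 0 ω)⁺ ∂P := fun i =>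
    ((hident i 0).comp (measurable_id.max measurable_const)).integral_eq
  rw [Tstar_eq_const_add_sum, hindep.variance_const_add_sum_comp
      (measurable_linearizedSummand m n τ _ C) _
      (fun i hi => memLp_linearizedSummand_comp (hmeas i) (hint2 i hi) m n τ _ C i),
    sum_congr rfl fun i hi => variance_linearizedSummand_comp (hmeas i) (htail i hi) (hcont i hi)
      (hint2 i hi) m n _ C i,
    sum_variance_linearizedSummand m n τ _ C _ _ hμ]
  simp only [mul_ite_pos_eq_posPart]
  ring

/-- Conditionally on the design `{(D_i, C_i)}` (here fixed), if the errors
`e_1, …, e_{m+n}` are i.i.d. with `P(e_i > 0) = 1 − τ` (and continuously distributed, so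
`P(e_i = 0) = 0`) and `E[e_i² I(e_i>0)] < ∞`, then the variance of the linearized statistic is
`var(T*) = {(1−τ)m}⁻² Σ_{D_i=1}(E[e_i²I(e_i>0)] − (E[e_iI(e_i>0)])²)`
`+ τ(1−τ)(C̄_τ(1)−C̄_τ(0))² U_f⁻² Σ_i C_i*²`
`+ {(1−τ)n}⁻² Σ_{D_i=0}(E[e_i²I(e_i>0)] − (E[e_iI(e_i>0)])²)`;
in particular, the covariance cross-terms vanish because `Σ_{D_i=d} C_i* = 0` within
each group. -/
theorem coves_linearized_variance
    (P : Measure Ω) [IsProbabilityMeasure P]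
    (m n : ℕ) (hm : 0 < m) (hn : 0 < n)
    (τ δτ : ℝ) (hτ : τ ∈ Set.Ioo (0 : ℝ) 1)
    (C f : ℕ → ℝ) (Cb1 Cb0 : ℝ)
    (e : ℕ → Ω → ℝ) (hmeas : ∀ i, Measurable (e i))
    (hindep : iIndepFun e P)
    (hident : ∀ i j, IdentDistrib (e i) (e j) P P)
    (htail : ∀ i ∈ Finset.range (m + n), (P {ω | 0 < e i ω}).toReal = 1 - τ)
    (hcont : ∀ i ∈ Finset.range (m + n), P {ω | e i ω = 0} = 0)
    (hint2 : ∀ i ∈ Finset.range (m + n),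
      Integrable (fun ω => (e i ω) ^ 2 * (if 0 < e i ω then 1 else 0)) P) :
    variance (Tstar m n τ δτ C f Cb1 Cb0 e) P =
        (((1 - τ) * m) ^ 2)⁻¹ *
          ∑ i ∈ grp1 m,
            ((∫ ω, (e i ω) ^ 2 * (if 0 < e i ω then 1 else 0) ∂P)
              - (∫ ω, e i ω * (if 0 < e i ω then 1 else 0) ∂P) ^ 2)
      + τ * (1 - τ) * (Cb1 - Cb0) ^ 2 * ((Uf m n C f) ^ 2)⁻¹ *
          ∑ i ∈ Finset.range (m + n), (Cstar m n C i) ^ 2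
      + (((1 - τ) * n) ^ 2)⁻¹ *
          ∑ i ∈ grp0 m n,
            ((∫ ω, (e i ω) ^ 2 * (if 0 < e i ω then 1 else 0) ∂P)
              - (∫ ω, e i ω * (if 0 < e i ω then 1 else 0) ∂P) ^ 2) ∧
      (∑ i ∈ grp1 m, Cstar m n C i = 0 ∧ ∑ i ∈ grp0 m n, Cstar m n C i = 0) :=
  coves_linearized_variance_general P m n τ δτ C f Cb1 Cb0 e hmeas hindep hident htail hcont hint2
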